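/- For q ≥ 1, the generating function for the number of q-decreasing words by length is F_q(x) = (1 − x^{q+1}) / (1 − 2x + x^{q+2}); equivalently, writing f_n for the number of q-decreasing words of length n, the sequence satisfies f_n = 2 f_{n−1} − f_{n−q−2} for n ≥ q+2, with appropriate initial conditions f_n = 2^n for 0 ≤ n ≤ q, f_{q+1} = 2^{q+1} − 1. -/

import Mathlib

/-- A binary word (`List Bool`, `true` = bit 1) is `q`-decreasing if it is a
concatenation `1^{b0} ++ 0^{a1}1^{b1} ++ ... ++ 0^{am}1^{bm}` where every
block `0^a 1^b` with `a > 0` satisfies `q*a > b` (equivalently, every maximal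
factor of the form `0^a 1^b` with `a > 0` satisfies `q*a > b`). -/
inductive QDecreasing (q : ℕ) : List Bool → Prop where
  | ones (m : ℕ) : QDecreasing q (List.replicate m true)
  | snoc (w : List Bool) (a b : ℕ) (ha : 0 < a) (hb : b < q * a)
      (hw : QDecreasing q w) :
      QDecreasing q (w ++ List.replicate a false ++ List.replicate b true)

/-!
Let `F n` count the `q`-decreasing words of length `n`. Since the class is prefix closed and
appending `0` never leaves it, every word `w c` with `w` counted by `F n` is `q`-decreasing except
when `c = 1` and `w` is *saturated*, i.e. `w = u 0^(k+1) 1^(q(k+1)-1)` with `u` `q`-decreasing and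
not ending in `0`. So `F (n+1) + G n = 2 F n`, where `G n` counts saturated words of length `n`.

Saturated words with `k = 0` of length `m+q+1` are `u 0 1^(q-1)`, with `u` counted by
`F (m+1) - F m` (the words not ending in `0`); those with `k > 0` correspond to saturated words of
length `m` by lowering `k`. Hence `G (m+q+1) = F (m+1) - F m + G m = F m`, and together with
`G n = 0` for `n < q` and `G q = 1` this reads `G = x^q (1 + x F)`. Substituting into
`F - 1 + x G = 2 x F` gives `F (1 - 2x + x^(q+2)) = 1 - x^(q+1)`.
-/

open List

theorem List.append_replicate_inj {α : Type*} {c : α} {v v' : List α} {j j' : ℕ}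
    (hv : v.getLast? ≠ some c) (hv' : v'.getLast? ≠ some c)
    (h : v ++ replicate j c = v' ++ replicate j' c) : v = v' ∧ j = j' := by
  wlog hj : j ≤ j' generalizing v v' j j'
  · exact (this hv' hv h.symm (by omega)).imp Eq.symm Eq.symm
  obtain ⟨d, rfl⟩ := Nat.exists_eq_add_of_le hj
  rw [add_comm, replicate_add, ← append_assoc] at h
  obtain rfl := append_cancel_right h
  rcases d with _ | d
  · simp
  · simp [getLast?_append, getLast?_replicate] at hv

theorem List.exists_eq_append_replicate {α : Type*} (c : α) (l : List α) :
    ∃ v j, v.getLast? ≠ some c ∧ l = v ++ replicate j c := by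
  induction l using reverseRecOn with
  | nil => exact ⟨[], 0, by simp, rfl⟩
  | append_singleton l x ih =>
    by_cases hx : x = c
    · obtain ⟨v, j, hv, rfl⟩ := ih
      exact ⟨v, j + 1, hv, by simp [hx, replicate_succ']⟩
    · exact ⟨l ++ [x], 0, by simpa using hx, by simp⟩

def block (u : List Bool) (a b : ℕ) : List Bool :=
  u ++ replicate a false ++ replicate b true

theorem length_block (u : List Bool) (a b : ℕ) : (block u a b).length = u.length + a + b := by
  simp [block, add_assoc]

theorem block_inj {u u' : List Bool} {a a' b b' : ℕ} (hu : u.getLast? ≠ some false)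
    (hu' : u'.getLast? ≠ some false) (ha : 0 < a) (ha' : 0 < a')
    (h : block u a b = block u' a' b') : u = u' ∧ a = a' ∧ b = b' := by
  have ends_false {v : List Bool} {n : ℕ} (hn : 0 < n) :
      (v ++ replicate n false).getLast? ≠ some true := by
    simp [getLast?_append, getLast?_replicate, hn.ne']
  obtain ⟨h, rfl⟩ := append_replicate_inj (ends_false ha) (ends_false ha') h
  obtain ⟨rfl, rfl⟩ := append_replicate_inj hu hu' (append_cancel_right h)
  exact ⟨rfl, rfl, rfl⟩

theorem eq_replicate_or_eq_block (w : List Bool) :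
    (∃ m, w = replicate m true) ∨
      ∃ u a b, u.getLast? ≠ some false ∧ 0 < a ∧ w = block u a b := by
  obtain ⟨v, b, hv, rfl⟩ := exists_eq_append_replicate true w
  obtain ⟨u, a, hu, rfl⟩ := exists_eq_append_replicate false v
  rcases Nat.eq_zero_or_pos a with rfl | ha
  · have : u = [] := by
      rw [← getLast?_eq_none_iff]
      cases h : u.getLast? with
      | none => rfl
      | some x => cases x <;> simp_all
    exact .inl ⟨b, by simp [this]⟩
  · exact .inr ⟨u, a, b, hu, ha, rfl⟩

namespace QDecreasing

variable {q : ℕ} {w : List Bool}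

theorem nil : QDecreasing q [] := ones 0

theorem append_false (hq : 0 < q) (h : QDecreasing q w) : QDecreasing q (w ++ [false]) := by
  simpa using snoc w 1 0 one_pos (by simpa) h

theorem dropLast (h : QDecreasing q w) : QDecreasing q w.dropLast := by
  cases h with
  | ones m => rw [dropLast_replicate]; exact ones _
  | snoc w a b ha hb h =>
    rcases b with _ | b
    · obtain ⟨a, rfl⟩ := Nat.exists_eq_add_one_of_ne_zero ha.ne'
      rcases a with _ | a
      · simpa using h
      · simpa [replicate_succ', ← append_assoc] using
          snoc w (a + 1) 0 (by omega) (by nlinarith) h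
    · rw [replicate_succ', ← append_assoc, dropLast_concat]
      exact snoc w a b ha (by omega) h

theorem of_append {s : List Bool} (h : QDecreasing q (w ++ s)) : QDecreasing q w := by
  induction s using reverseRecOn with
  | nil => simpa using h
  | append_singleton s x ih => exact ih (by simpa [← append_assoc] using h.dropLast)

theorem block_iff {u : List Bool} {a b : ℕ} (hu : u.getLast? ≠ some false) (ha : 0 < a) :
    QDecreasing q (block u a b) ↔ QDecreasing q u ∧ b < q * a := by
  refine ⟨fun h => ?_, fun h => snoc u a b ha h.2 h.1⟩
  generalize hw : block u a b = w at h
  cases h with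
  | ones m =>
    have : false ∈ block u a b := by simp [block, ha.ne']
    simp [hw] at this
  | snoc w a' b' ha' hb' hw' =>
    -- the trailing zeros of `w` join the last block
    obtain ⟨v, j, hv, rfl⟩ := exists_eq_append_replicate false w
    have hvj : block v (j + a') b' = block u a b := by
      rw [hw]; simp only [block, ← replicate_append_replicate, append_assoc]
    obtain ⟨rfl, rfl, rfl⟩ := block_inj hv hu (by omega) ha hvj
    exact ⟨hw'.of_append, hb'.trans_le (Nat.mul_le_mul_left q (by omega))⟩

end QDecreasing

def saturatedBlock (q : ℕ) (u : List Bool) (k : ℕ) : List Bool :=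
  block u (k + 1) (q * (k + 1) - 1)

theorem length_saturatedBlock {q : ℕ} (hq : 0 < q) (u : List Bool) (k : ℕ) :
    (saturatedBlock q u k).length = u.length + (q + 1) * k + q := by
  have : 0 < q * (k + 1) := by positivity
  simp only [saturatedBlock, length_block]
  grind

section Saturated

variable {q : ℕ} {u w : List Bool}

theorem qDecreasing_saturatedBlock (hq : 0 < q) (hu : u.getLast? ≠ some false)
    (hu' : QDecreasing q u) (k : ℕ) :
    QDecreasing q (saturatedBlock q u k) ∧ ¬ QDecreasing q (saturatedBlock q u k ++ [true]) := by
  have hk : 0 < k + 1 := k.succ_pos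
  have : 0 < q * (k + 1) := by positivity
  rw [saturatedBlock, QDecreasing.block_iff hu hk, block, append_assoc, ← replicate_succ',
    ← block, QDecreasing.block_iff hu hk]
  exact ⟨⟨hu', by omega⟩, fun h => by omega⟩

theorem exists_eq_saturatedBlock (h : QDecreasing q w) (ht : ¬ QDecreasing q (w ++ [true])) :
    ∃ u k, u.getLast? ≠ some false ∧ QDecreasing q u ∧ w = saturatedBlock q u k := by
  rcases eq_replicate_or_eq_block w with ⟨m, rfl⟩ | ⟨u, a, b, hu, ha, rfl⟩
  · exact absurd (by simpa [replicate_succ'] using QDecreasing.ones (q := q) (m + 1)) ht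
  · rw [QDecreasing.block_iff hu ha] at h
    rw [block, append_assoc, ← replicate_succ', ← block, QDecreasing.block_iff hu ha] at ht
    obtain ⟨k, rfl⟩ := Nat.exists_eq_add_one_of_ne_zero ha.ne'
    have : ¬ b + 1 < q * (k + 1) := fun hb => ht ⟨h.1, hb⟩
    exact ⟨u, k, hu, h.1, by rw [saturatedBlock]; congr; omega⟩

end Saturated

abbrev Words (P : List Bool → Prop) (n : ℕ) : Type := {w : List Bool // w.length = n ∧ P w}

/-- `(u, k)` stands for the saturated word `saturatedBlock q u k` of length `n`. -/
abbrev SaturatedParams (q n : ℕ) : Type :=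
  {p : List Bool × ℕ //
    p.1.getLast? ≠ some false ∧ QDecreasing q p.1 ∧ p.1.length + (q + 1) * p.2 + q = n}

instance (P : List Bool → Prop) (n : ℕ) : Finite (Words P n) :=
  ((List.finite_length_eq Bool n).subset fun _ hw => hw.1).to_subtype

instance (q n : ℕ) : Finite (SaturatedParams q n) :=
  (((List.finite_length_le Bool n).prod (Set.finite_Iic n)).subset
    fun p hp => ⟨show p.1.length ≤ n by nlinarith [hp.2.2],
      show p.2 ≤ n by nlinarith [hp.2.2]⟩).to_subtype

section Counting

variable {q : ℕ}

theorem card_words_zero : Nat.card (Words (QDecreasing q) 0) = 1 :=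
  Nat.card_eq_one_iff_exists.mpr
    ⟨⟨[], rfl, .nil⟩, fun w => Subtype.ext (length_eq_zero_iff.mp w.2.1)⟩

def splitLast (hq : 0 < q) (n : ℕ) :
    Words (QDecreasing q) (n + 1) ⊕ SaturatedParams q n → Words (QDecreasing q) n × Bool :=
  Sum.elim
    (fun w => (⟨w.1.dropLast, by simp [w.2.1], w.2.2.dropLast⟩,
      w.1.getLast (ne_nil_of_length_eq_add_one w.2.1)))
    (fun p => (⟨saturatedBlock q p.1.1 p.1.2, (length_saturatedBlock hq _ _).trans p.2.2.2,
      (qDecreasing_saturatedBlock hq p.2.1 p.2.2.1 _).1⟩, true))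

theorem splitLast_bijective (hq : 0 < q) (n : ℕ) : Function.Bijective (splitLast hq n) := by
  refine ⟨Function.Injective.sumElim ?_ ?_ ?_, ?_⟩
  · intro v v' h
    simp only [Prod.mk.injEq, Subtype.mk.injEq] at h
    have e := dropLast_append_getLast (ne_nil_of_length_eq_add_one v.2.1)
    rw [h.1, h.2, dropLast_append_getLast] at e
    exact Subtype.ext e.symm
  · intro p p' h
    simp only [Prod.mk.injEq, Subtype.mk.injEq, and_true] at h
    obtain ⟨hu, hk, -⟩ := block_inj p.2.1 p'.2.1 p.1.2.succ_pos p'.1.2.succ_pos h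
    exact Subtype.ext (Prod.ext hu (by simpa using hk))
  · intro v p h
    simp only [Prod.mk.injEq, Subtype.mk.injEq] at h
    have e := dropLast_append_getLast (ne_nil_of_length_eq_add_one v.2.1)
    rw [h.1, h.2] at e
    exact (qDecreasing_saturatedBlock hq p.2.1 p.2.2.1 _).2 (e ▸ v.2.2)
  · rintro ⟨w, c⟩
    by_cases h : QDecreasing q (w.1 ++ [c])
    · exact ⟨.inl ⟨w.1 ++ [c], by simp [w.2.1], h⟩, by simp [splitLast]⟩
    · obtain rfl : c = true := by
        cases c
        · exact absurd (w.2.2.append_false hq) h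
        · rfl
      obtain ⟨u, k, hu, hu', hw⟩ := exists_eq_saturatedBlock w.2.2 h
      refine ⟨.inr ⟨(u, k), hu, hu', ?_⟩, ?_⟩
      · rw [← length_saturatedBlock hq, ← hw, w.2.1]
      · exact Prod.ext (Subtype.ext hw.symm) rfl

theorem card_words_succ_add_card_saturatedParams (hq : 0 < q) (n : ℕ) :
    Nat.card (Words (QDecreasing q) (n + 1)) + Nat.card (SaturatedParams q n) =
      2 * Nat.card (Words (QDecreasing q) n) := by
  have h := Nat.card_eq_of_bijective _ (splitLast_bijective hq n)
  rwa [Nat.card_sum, Nat.card_prod, Nat.card_eq_fintype_card (α := Bool), Fintype.card_bool,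
    mul_comm] at h

theorem card_words_succ (hq : 0 < q) (n : ℕ) :
    Nat.card (Words (QDecreasing q) (n + 1)) =
      Nat.card (Words (fun w => QDecreasing q w ∧ w.getLast? ≠ some false) (n + 1)) +
        Nat.card (Words (QDecreasing q) n) := by
  rw [← Nat.card_sum]
  refine (Nat.card_eq_of_bijective (Sum.elim (fun w => ⟨w.1, w.2.1, w.2.2.1⟩)
    fun w => ⟨w.1 ++ [false], by simp [w.2.1], w.2.2.append_false hq⟩) ⟨?_, ?_⟩).symm
  · refine Function.Injective.sumElim ?_ ?_ ?_
    · exact fun v v' h => Subtype.ext (Subtype.mk.inj h)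
    · exact fun v v' h => Subtype.ext (append_cancel_right (Subtype.mk.inj h))
    · intro v w h
      exact v.2.2.2 (by rw [Subtype.mk.inj h, getLast?_concat])
  · rintro ⟨w, hl, hw⟩
    by_cases h : w.getLast? = some false
    · exact ⟨.inr ⟨w.dropLast, by simp [hl], hw.dropLast⟩,
        Subtype.ext (dropLast_append_getLast? _ h)⟩
    · exact ⟨.inl ⟨w, hl, hw, h⟩, rfl⟩

theorem card_saturatedParams_add (m : ℕ) :
    Nat.card (SaturatedParams q (m + q + 1)) =
      Nat.card (Words (fun w => QDecreasing q w ∧ w.getLast? ≠ some false) (m + 1)) +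
        Nat.card (SaturatedParams q m) := by
  rw [← Nat.card_sum]
  refine (Nat.card_eq_of_bijective
    (Sum.elim (fun w => ⟨(w.1, 0), w.2.2.2, w.2.2.1, by rw [w.2.1]; ring⟩)
      fun p => ⟨(p.1.1, p.1.2 + 1), p.2.1, p.2.2.1, by linarith [p.2.2.2]⟩) ⟨?_, ?_⟩).symm
  · refine Function.Injective.sumElim ?_ ?_ ?_
    · intro v v' h
      simp only [Subtype.mk.injEq, Prod.mk.injEq, and_true] at h
      exact Subtype.ext h
    · intro p p' h
      simp only [Subtype.mk.injEq, Prod.mk.injEq, add_left_inj] at h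
      exact Subtype.ext (Prod.ext h.1 h.2)
    · intro v p h
      simp at h
  · rintro ⟨⟨u, _ | k⟩, hu, hu', hl⟩
    · exact ⟨.inl ⟨u, by linarith, hu', hu⟩, rfl⟩
    · exact ⟨.inr ⟨(u, k), hu, hu', by linarith⟩, rfl⟩

theorem card_saturatedParams_of_lt {n : ℕ} (h : n < q) : Nat.card (SaturatedParams q n) = 0 :=
  have : IsEmpty (SaturatedParams q n) := ⟨fun p => by have := p.2.2.2; omega⟩
  Nat.card_of_isEmpty

theorem card_saturatedParams_self : Nat.card (SaturatedParams q q) = 1 := by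
  refine Nat.card_eq_one_iff_exists.mpr ⟨⟨([], 0), by simp, .nil, by simp⟩, ?_⟩
  rintro ⟨⟨u, k⟩, -, -, hl⟩
  obtain rfl : k = 0 := by nlinarith
  obtain rfl : u = [] := length_eq_zero_iff.mp (by simpa using hl)
  rfl

theorem card_saturatedParams_eq_card_words (hq : 0 < q) (m : ℕ) :
    Nat.card (SaturatedParams q (m + q + 1)) = Nat.card (Words (QDecreasing q) m) := by
  have h₁ := card_words_succ_add_card_saturatedParams hq m
  have h₂ := card_words_succ hq m
  have h₃ := card_saturatedParams_add (q := q) m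
  omega

end Counting

section Recurrence

variable {f g : ℕ → ℕ} {q : ℕ}

theorem eq_two_pow_of_le (hf₀ : f 0 = 1) (hfg : ∀ n, f (n + 1) + g n = 2 * f n)
    (hg : ∀ n < q, g n = 0) : ∀ n ≤ q, f n = 2 ^ n := by
  intro n hn
  induction n with
  | zero => exact hf₀
  | succ n ih => have := hfg n; rw [hg n hn, ih (by omega)] at this; rw [pow_succ]; omega

theorem eq_two_pow_sub_one (hf₀ : f 0 = 1) (hfg : ∀ n, f (n + 1) + g n = 2 * f n)
    (hg : ∀ n < q, g n = 0) (hgq : g q = 1) : f (q + 1) = 2 ^ (q + 1) - 1 := by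
  have := hfg q
  rw [hgq, eq_two_pow_of_le hf₀ hfg hg q le_rfl] at this
  rw [pow_succ]
  omega

theorem add_eq_two_mul_of_le (hfg : ∀ n, f (n + 1) + g n = 2 * f n)
    (hgf : ∀ m, g (m + q + 1) = f m) (n : ℕ) (hn : q + 2 ≤ n) :
    f n + f (n - (q + 2)) = 2 * f (n - 1) := by
  obtain ⟨m, rfl⟩ := Nat.exists_eq_add_of_le' hn
  have := hfg (m + q + 1)
  rw [hgf] at this
  convert this using 3 <;> omega

open PowerSeries in
theorem mk_mul_eq_one_sub_X_pow (hf₀ : f 0 = 1) (hfg : ∀ n, f (n + 1) + g n = 2 * f n)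
    (hg : ∀ n < q, g n = 0) (hgq : g q = 1) (hgf : ∀ m, g (m + q + 1) = f m) :
    mk (fun n => (f n : ℤ)) * (1 - 2 * X + X ^ (q + 2)) = 1 - X ^ (q + 1) := by
  set F := mk fun n => (f n : ℤ)
  set G := mk fun n => (g n : ℤ)
  have hF : F - 1 + X * G = X * (F + F) := by
    ext (_ | n)
    · simp [F, hf₀]
    · simp only [F, G, map_add, map_sub, coeff_mk, coeff_one, coeff_succ_X_mul,
        Nat.add_eq_zero_iff, one_ne_zero, and_false, ↓reduceIte, sub_zero]
      exact_mod_cast (hfg n).trans (two_mul _)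
  have hG : G = X ^ q * (1 + X * F) := by
    ext n
    rw [coeff_X_pow_mul']
    rcases lt_trichotomy n q with h | rfl | h
    · simp [G, hg n h, h.not_ge]
    · simp [G, hgq]
    · obtain ⟨m, rfl⟩ : ∃ m, n = m + q + 1 := ⟨n - q - 1, by omega⟩
      simp [G, F, hgf, show q ≤ m + q + 1 by omega, show m + q + 1 - q = m + 1 by omega,
        coeff_succ_X_mul]
  linear_combination hF - X * hG

end Recurrence

theorem qdecreasing_counting_gf (q : ℕ) (hq : 1 ≤ q) :
    (PowerSeries.mk (fun n =>
        (Nat.card {w : List Bool // w.length = n ∧ QDecreasing q w} : ℤ)) *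
      (1 - 2 * PowerSeries.X + PowerSeries.X ^ (q + 2)) =
      1 - PowerSeries.X ^ (q + 1)) ∧
    (∀ n ≤ q, Nat.card {w : List Bool // w.length = n ∧ QDecreasing q w} = 2 ^ n) ∧
    (Nat.card {w : List Bool // w.length = q + 1 ∧ QDecreasing q w} = 2 ^ (q + 1) - 1) ∧
    (∀ n, q + 2 ≤ n →
      Nat.card {w : List Bool // w.length = n ∧ QDecreasing q w} +
        Nat.card {w : List Bool // w.length = n - (q + 2) ∧ QDecreasing q w} =
      2 * Nat.card {w : List Bool // w.length = n - 1 ∧ QDecreasing q w}) := by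
  set f : ℕ → ℕ := fun n => Nat.card (Words (QDecreasing q) n)
  set g : ℕ → ℕ := fun n => Nat.card (SaturatedParams q n)
  have hf₀ : f 0 = 1 := card_words_zero
  have hfg : ∀ n, f (n + 1) + g n = 2 * f n := card_words_succ_add_card_saturatedParams hq
  have hg : ∀ n < q, g n = 0 := fun _ => card_saturatedParams_of_lt
  have hgq : g q = 1 := card_saturatedParams_self
  have hgf : ∀ m, g (m + q + 1) = f m := card_saturatedParams_eq_card_words hq
  exact ⟨mk_mul_eq_one_sub_X_pow hf₀ hfg hg hgq hgf, eq_two_pow_of_le hf₀ hfg hg,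
    eq_two_pow_sub_one hf₀ hfg hg hgq, add_eq_two_mul_of_le hfg hgf⟩
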